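/- The Killing vector fields of the McLenaghan–Tariq–Tupper metric satisfy the bracket relations [η₁, η_a] = 0 for every a ∈ {1,2,3,4}, [η₂, η₃] = k η₁, [η₂, η₄] = −(k/2) η₂, and [η₃, η₄] = (k/2) η₃, where the brackets are Lie brackets of vector fields on ℝ⁴. -/

import Mathlib

/-! All four fields are affine, `ηₐ(x) = bₐ + Aₐ x`, and for affine fields `X = b + A x`,
`Y = c + B x` the bracket is `B X − A Y`, so every relation is a computation with 4 × 4 matrices. -/

/-- Partial derivative `∂f/∂xⁱ` of a real-valued function on `ℝ⁴`. -/
noncomputable def pd (i : Fin 4) (f : (Fin 4 → ℝ) → ℝ) (x : Fin 4 → ℝ) : ℝ :=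
  fderiv ℝ f x (Pi.single i 1)
/-- The Killing vector fields `η₁,…,η₄` (indices `0,…,3`). -/
noncomputable def η (k : ℝ) (a : Fin 4) (x : Fin 4 → ℝ) : Fin 4 → ℝ :=
  ![![1, 0, 0, 0],
    ![0, 0, 0, 1],
    ![k * x 3, 0, 1, 0],
    ![-2, 1, k / 2 * x 2, -(k / 2) * x 3]] a
/-- The Lie bracket of vector fields on `ℝ⁴`: `[X,Y]^i = Σ_j (X^j ∂_j Y^i − Y^j ∂_j X^i)`. -/
noncomputable def lieBracket (X Y : (Fin 4 → ℝ) → Fin 4 → ℝ) (x : Fin 4 → ℝ) (i : Fin 4) : ℝ :=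
  ∑ j : Fin 4, (X x j * pd j (fun y => Y y i) x - Y x j * pd j (fun y => X y i) x)

open Matrix

lemma pd_affine_apply (A : Matrix (Fin 4) (Fin 4) ℝ) (b x : Fin 4 → ℝ) (i j : Fin 4) :
    pd j (fun y => (b + A *ᵥ y) i) x = A i j := by
  let ℓ : (Fin 4 → ℝ) →L[ℝ] ℝ :=
    (ContinuousLinearMap.proj i).comp (LinearMap.toContinuousLinearMap A.mulVecLin)
  have hℓ : HasFDerivAt (fun y => (b + A *ᵥ y) i) ℓ x := ℓ.hasFDerivAt.const_add (b i)
  rw [pd, hℓ.fderiv]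
  simp [ℓ]

lemma lieBracket_eq_of_affine {X Y : (Fin 4 → ℝ) → Fin 4 → ℝ} {A B : Matrix (Fin 4) (Fin 4) ℝ}
    {b c : Fin 4 → ℝ} (hX : ∀ y, X y = b + A *ᵥ y) (hY : ∀ y, Y y = c + B *ᵥ y)
    (x : Fin 4 → ℝ) (i : Fin 4) :
    lieBracket X Y x i = (B *ᵥ X x - A *ᵥ Y x) i := by
  simp only [lieBracket, hX, hY, pd_affine_apply, Pi.sub_apply, mulVec, dotProduct,
    Finset.sum_sub_distrib, mul_comm]

noncomputable def ηLinear (k : ℝ) (a : Fin 4) : Matrix (Fin 4) (Fin 4) ℝ :=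
  ![0, 0, !![0, 0, 0, k; 0, 0, 0, 0; 0, 0, 0, 0; 0, 0, 0, 0],
    !![0, 0, 0, 0; 0, 0, 0, 0; 0, 0, k / 2, 0; 0, 0, 0, -(k / 2)]] a

lemma η_eq_affine (k : ℝ) (a : Fin 4) (y : Fin 4 → ℝ) :
    η k a y = η k a 0 + ηLinear k a *ᵥ y := by
  ext i
  fin_cases a <;> fin_cases i <;> simp [η, ηLinear, dotProduct, Fin.sum_univ_four]

theorem eta_bracket_relations_general (k : ℝ) :
    (∀ a : Fin 4, ∀ x : Fin 4 → ℝ, ∀ i : Fin 4, lieBracket (η k 0) (η k a) x i = 0) ∧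
    (∀ x : Fin 4 → ℝ, ∀ i : Fin 4, lieBracket (η k 1) (η k 2) x i = k * η k 0 x i) ∧
    (∀ x : Fin 4 → ℝ, ∀ i : Fin 4, lieBracket (η k 1) (η k 3) x i = -(k / 2) * η k 1 x i) ∧
    (∀ x : Fin 4 → ℝ, ∀ i : Fin 4, lieBracket (η k 2) (η k 3) x i = (k / 2) * η k 2 x i) := by
  simp only [lieBracket_eq_of_affine (η_eq_affine k _) (η_eq_affine k _)]
  refine ⟨fun a x i => ?_, fun x i => ?_, fun x i => ?_, fun x i => ?_⟩
  · fin_cases a <;> fin_cases i <;> simp [η, ηLinear]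
  all_goals fin_cases i <;> simp [η, ηLinear] <;> ring

/-- The Killing fields satisfy `[η₁,η_a] = 0`, `[η₂,η₃] = k η₁`,
`[η₂,η₄] = −(k/2) η₂`, `[η₃,η₄] = (k/2) η₃`. -/
theorem eta_bracket_relations (k : ℝ) (hk : 0 < k) :
    (∀ a : Fin 4, ∀ x : Fin 4 → ℝ, ∀ i : Fin 4, lieBracket (η k 0) (η k a) x i = 0) ∧
    (∀ x : Fin 4 → ℝ, ∀ i : Fin 4, lieBracket (η k 1) (η k 2) x i = k * η k 0 x i) ∧
    (∀ x : Fin 4 → ℝ, ∀ i : Fin 4, lieBracket (η k 1) (η k 3) x i = -(k / 2) * η k 1 x i) ∧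
    (∀ x : Fin 4 → ℝ, ∀ i : Fin 4, lieBracket (η k 2) (η k 3) x i = (k / 2) * η k 2 x i) :=
  eta_bracket_relations_general k
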